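/- arXiv:1209.4576 — 5 statements merged into one kernel-verified Lean document; each statement's English description precedes it below -/
import Mathlib

section
/- Approximate bisimilarity satisfies a triangle-type inequality: if R₁ is an ε₁-approximate bisimulation relation between T₁ and T₂, and R₂ is an ε₂-approximate bisimulation relation between T₂ and T₃, then the composition R₁ ∘ R₂ = {(x₁,x₃) : ∃x₂, (x₁,x₂) ∈ R₁ ∧ (x₂,x₃) ∈ R₂} is an (ε₁+ε₂)-approximate bisimulation relation between T₁ and T₃. -/
/-- A (metric) labeled transition system with states `X`, inputs `U`, outputs `Y`. -/
structure TS (X U Y : Type*) where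
  S : X → U → Set X
  O : X → Y

/-- `R` is an `ε`-approximate bisimulation relation between `T₁` and `T₂`. -/
def IsApproxBisim {X₁ X₂ U Y : Type*} [PseudoMetricSpace Y] (ε : ℝ)
    (T₁ : TS X₁ U Y) (T₂ : TS X₂ U Y) (R : Set (X₁ × X₂)) : Prop :=
  ∀ p ∈ R, dist (T₁.O p.1) (T₂.O p.2) ≤ ε ∧
    (∀ u, ∀ x₁' ∈ T₁.S p.1 u, ∃ x₂' ∈ T₂.S p.2 u, (x₁', x₂') ∈ R) ∧
    (∀ u, ∀ x₂' ∈ T₂.S p.2 u, ∃ x₁' ∈ T₁.S p.1 u, (x₁', x₂') ∈ R)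

/-! An approximate bisimulation is a relation that keeps outputs `ε`-close and is a simulation in
both directions, the backward one being a simulation by the inverse relation. Simulations compose,
`(R₁ ○ R₂).inv = R₂.inv ○ R₁.inv` reduces the backward direction to the forward one, and the
distance bounds add up by the triangle inequality through the intermediate state. -/

open SetRel

namespace TS

variable {X₁ X₂ X₃ U Y : Type*} {T₁ : TS X₁ U Y} {T₂ : TS X₂ U Y} {T₃ : TS X₃ U Y}

def IsSimulation (T₁ : TS X₁ U Y) (T₂ : TS X₂ U Y) (R : SetRel X₁ X₂) : Prop :=
  ∀ p ∈ R, ∀ u, ∀ x₁' ∈ T₁.S p.1 u, ∃ x₂' ∈ T₂.S p.2 u, (x₁', x₂') ∈ R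

theorem IsSimulation.comp {R₁ : SetRel X₁ X₂} {R₂ : SetRel X₂ X₃}
    (h₁ : T₁.IsSimulation T₂ R₁) (h₂ : T₂.IsSimulation T₃ R₂) :
    T₁.IsSimulation T₃ (R₁ ○ R₂) := by
  rintro ⟨x₁, x₃⟩ ⟨x₂, hx₁₂, hx₂₃⟩ u x₁' hx₁'
  obtain ⟨x₂', hx₂', hx₁₂'⟩ := h₁ _ hx₁₂ u x₁' hx₁'
  obtain ⟨x₃', hx₃', hx₂₃'⟩ := h₂ _ hx₂₃ u x₂' hx₂'
  exact ⟨x₃', hx₃', x₂', hx₁₂', hx₂₃'⟩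

end TS

section

variable {X₁ X₂ X₃ U Y : Type*} [PseudoMetricSpace Y]
  {T₁ : TS X₁ U Y} {T₂ : TS X₂ U Y} {T₃ : TS X₃ U Y}

theorem isApproxBisim_iff {ε : ℝ} {R : SetRel X₁ X₂} :
    IsApproxBisim ε T₁ T₂ R ↔ (∀ p ∈ R, dist (T₁.O p.1) (T₂.O p.2) ≤ ε) ∧
      T₁.IsSimulation T₂ R ∧ T₂.IsSimulation T₁ R.inv := by
  refine ⟨fun h ↦ ⟨fun p hp ↦ (h p hp).1, fun p hp ↦ (h p hp).2.1, ?_⟩,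
    fun ⟨hdist, hfwd, hbwd⟩ p hp ↦ ⟨hdist p hp, hfwd p hp, hbwd p.swap hp⟩⟩
  rintro ⟨x₂, x₁⟩ hp u x₂' hx₂'
  exact (h (x₁, x₂) hp).2.2 u x₂' hx₂'

theorem dist_le_add_of_mem_comp {ε₁ ε₂ : ℝ} {R₁ : SetRel X₁ X₂} {R₂ : SetRel X₂ X₃}
    (h₁ : ∀ p ∈ R₁, dist (T₁.O p.1) (T₂.O p.2) ≤ ε₁)
    (h₂ : ∀ p ∈ R₂, dist (T₂.O p.1) (T₃.O p.2) ≤ ε₂) :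
    ∀ p ∈ R₁ ○ R₂, dist (T₁.O p.1) (T₃.O p.2) ≤ ε₁ + ε₂ := by
  rintro ⟨x₁, x₃⟩ ⟨x₂, hx₁₂, hx₂₃⟩
  calc dist (T₁.O x₁) (T₃.O x₃) ≤ dist (T₁.O x₁) (T₂.O x₂) + dist (T₂.O x₂) (T₃.O x₃) :=
        dist_triangle _ _ _
    _ ≤ ε₁ + ε₂ := add_le_add (h₁ _ hx₁₂) (h₂ _ hx₂₃)

end

/-- composition of an `ε₁`- and an `ε₂`-approximate bisimulation
relation is an `(ε₁+ε₂)`-approximate bisimulation relation. -/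
theorem approxBisim_comp {X₁ X₂ X₃ U Y : Type*} [PseudoMetricSpace Y]
    (ε₁ ε₂ : ℝ) (T₁ : TS X₁ U Y) (T₂ : TS X₂ U Y) (T₃ : TS X₃ U Y)
    (R₁ : Set (X₁ × X₂)) (R₂ : Set (X₂ × X₃))
    (h₁ : IsApproxBisim ε₁ T₁ T₂ R₁) (h₂ : IsApproxBisim ε₂ T₂ T₃ R₂) :
    IsApproxBisim (ε₁ + ε₂) T₁ T₃
      {p | ∃ x₂, (p.1, x₂) ∈ R₁ ∧ (x₂, p.2) ∈ R₂} := by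
  obtain ⟨hdist₁, hfwd₁, hbwd₁⟩ := isApproxBisim_iff.mp h₁
  obtain ⟨hdist₂, hfwd₂, hbwd₂⟩ := isApproxBisim_iff.mp h₂
  change IsApproxBisim (ε₁ + ε₂) T₁ T₃ (R₁ ○ R₂)
  refine isApproxBisim_iff.mpr ⟨dist_le_add_of_mem_comp hdist₁ hdist₂, hfwd₁.comp hfwd₂, ?_⟩
  rw [SetRel.inv_comp]
  exact hbwd₂.comp hbwd₁
end

section
/- One-step invariance of the relation R_ε: assume V satisfies V(S(x,p), S(y,p)) ≤ e^{-κτ}V(x,y) for the time-τ maps S(·,p) of each mode p, the modulus bound |V(x₁,x₂)-V(y₁,y₂)| ≤ γ(‖x₁-y₁‖+‖x₂-y₂‖), ‖Q_η(x)-x‖ ≤ η for all x, and ε ≥ η + α̲⁻¹((γ(2η)+γ(η)e^{-κτ})/(1-e^{-κτ})). Then for any x₁ ∈ ℝⁿ and x₂ ∈ [ℝⁿ]_η with V(Q_η(x₁), x₂) ≤ α̲(ε-η), and any mode p, setting x₁' = S(x₁,p) and x₂' = Q_η(S(x₂,p)), we have V(Q_η(x₁'), x₂') ≤ α̲(ε-η).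 -/
/-- one-step invariance of the relation `R_ε`: if
`V(Q_η(x₁),x₂) ≤ α̲(ε-η)` with `x₂` a lattice point, then after one step of mode `p`
(exact flow for `x₁`, quantized flow for `x₂`) the relation still holds:
`V(Q_η(x₁'),x₂') ≤ α̲(ε-η)` where `x₁' = S(x₁,p)`, `x₂' = Q_η(S(x₂,p))`.
The precision condition is stated in the equivalent form
`(γ(2η)+γ(η)e^{-κτ})/(1-e^{-κτ}) ≤ α̲(ε-η)`. -/
theorem relation_one_step_invariant (n : ℕ) (P : Type*) [Finite P]
    (η ε κ τ : ℝ) (hη : 0 < η) (hεη : η < ε) (hκ : 0 < κ) (hτ : 0 < τ)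
    (S : EuclideanSpace ℝ (Fin n) → P → EuclideanSpace ℝ (Fin n))
    (Q : EuclideanSpace ℝ (Fin n) → EuclideanSpace ℝ (Fin n))
    (V : EuclideanSpace ℝ (Fin n) → EuclideanSpace ℝ (Fin n) → ℝ)
    (αl γ : ℝ → ℝ)
    (hαl : StrictMonoOn αl (Set.Ici 0)) (hαl0 : αl 0 = 0)
    (hγ : StrictMonoOn γ (Set.Ici 0)) (hγ0 : γ 0 = 0)
    (hlower : ∀ x y, αl ‖x - y‖ ≤ V x y)
    (hdecay : ∀ x y p, V (S x p) (S y p) ≤ Real.exp (-κ * τ) * V x y)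
    (hmod : ∀ x₁ x₂ y₁ y₂, |V x₁ x₂ - V y₁ y₂| ≤ γ (‖x₁ - y₁‖ + ‖x₂ - y₂‖))
    (hQ : ∀ x, ‖Q x - x‖ ≤ η)
    (hprec : (γ (2 * η) + γ η * Real.exp (-κ * τ)) / (1 - Real.exp (-κ * τ))
      ≤ αl (ε - η))
    (x₁ x₂ : EuclideanSpace ℝ (Fin n)) (hx₂ : Q x₂ = x₂)
    (hrel : V (Q x₁) x₂ ≤ αl (ε - η)) (p : P) :
    V (Q (S x₁ p)) (Q (S x₂ p)) ≤ αl (ε - η) := by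

  set e := Real.exp (-κ * τ) with he
  have he1 : e < 1 := by
    rw [he]; exact Real.exp_lt_one_iff.2 (by nlinarith)
  have he0 : 0 < e := Real.exp_pos _
  have hεη' : (0:ℝ) ≤ ε - η := by linarith
  -- γ monotone
  have hγmono := hγ.monotoneOn
  have hγnn : ∀ t, 0 ≤ t → 0 ≤ γ t := fun t ht => by
    rw [← hγ0]; exact hγmono (le_refl (0:ℝ) : (0:ℝ) ∈ Set.Ici 0) ht (by linarith)
  have hαnn : 0 ≤ αl (ε - η) := by
    rw [← hαl0]; exact (hαl.monotoneOn) (le_refl (0:ℝ)) hεη' hεη'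
  -- step 1: V (Q x₁) x₂ to V x₁ x₂
  have h1 : V x₁ x₂ ≤ V (Q x₁) x₂ + γ η := by
    have := hmod x₁ x₂ (Q x₁) x₂
    have hb : ‖x₁ - Q x₁‖ + ‖x₂ - x₂‖ ≤ η := by
      have := hQ x₁
      rw [← norm_neg (Q x₁ - x₁)] at this
      simp only [neg_sub] at this
      simp [this]
    have hγb : γ (‖x₁ - Q x₁‖ + ‖x₂ - x₂‖) ≤ γ η := by
      apply hγmono _ (le_of_lt hη) hb
      exact Set.mem_Ici.2 (by positivity)
    have := abs_le.1 (hmod x₁ x₂ (Q x₁) x₂)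
    linarith [this.2]
  -- step 2: decay
  have h2 : V (S x₁ p) (S x₂ p) ≤ e * (V (Q x₁) x₂ + γ η) := by
    calc V (S x₁ p) (S x₂ p) ≤ e * V x₁ x₂ := hdecay x₁ x₂ p
    _ ≤ e * (V (Q x₁) x₂ + γ η) := by nlinarith
  -- step 3: quantization after flow
  have h3 : V (Q (S x₁ p)) (Q (S x₂ p)) ≤ V (S x₁ p) (S x₂ p) + γ (2 * η) := by
    have hb : ‖Q (S x₁ p) - S x₁ p‖ + ‖Q (S x₂ p) - S x₂ p‖ ≤ 2 * η := by
      have := hQ (S x₁ p); have := hQ (S x₂ p); linarith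
    have hγb : γ (‖Q (S x₁ p) - S x₁ p‖ + ‖Q (S x₂ p) - S x₂ p‖) ≤ γ (2 * η) := by
      apply hγmono _ (by linarith : (0:ℝ) ≤ 2*η) hb
      exact Set.mem_Ici.2 (by positivity)
    have := abs_le.1 (hmod (Q (S x₁ p)) (Q (S x₂ p)) (S x₁ p) (S x₂ p))
    linarith [this.2]
  have hprec' : γ (2 * η) + γ η * e ≤ (1 - e) * αl (ε - η) := by
    have h1e : 0 < 1 - e := by linarith
    rw [div_le_iff₀ h1e] at hprec
    linarith
  calc V (Q (S x₁ p)) (Q (S x₂ p)) ≤ e * (V (Q x₁) x₂ + γ η) + γ (2 * η) := by linarith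
  _ ≤ e * (αl (ε - η) + γ η) + γ (2 * η) := by nlinarith
  _ ≤ αl (ε - η) := by nlinarith
end

section
/- Under the hypotheses of Theorem 1, the relation R_ε = {(x₁,x₂) ∈ ℝⁿ × [ℝⁿ]_η : V(Q_η(x₁), x₂) ≤ α̲(ε-η)} is an ε-approximate bisimulation relation between T_τ(Σ) and T_{τ,η}(Σ), and moreover every state of T_τ(Σ) is related to some state of T_{τ,η}(Σ) and conversely (so T_τ(Σ) ∼_ε T_{τ,η}(Σ)). -/
/-- The lattice `[ℝⁿ]_η`. -/
def QLattice (n : ℕ) (η : ℝ) : Set (EuclideanSpace ℝ (Fin n)) :=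
  {q | ∀ i, ∃ k : ℤ, q i = (k : ℝ) * (2 * η / Real.sqrt n)}

open Set

theorem IsApproxBisim.of_deterministic {X₁ X₂ U Y : Type*} [PseudoMetricSpace Y] {ε : ℝ}
    {f₁ : X₁ → U → X₁} {f₂ : X₂ → U → X₂} {O₁ : X₁ → Y} {O₂ : X₂ → Y} {R : Set (X₁ × X₂)}
    (h : ∀ p ∈ R, dist (O₁ p.1) (O₂ p.2) ≤ ε ∧ ∀ u, (f₁ p.1 u, f₂ p.2 u) ∈ R) :
    IsApproxBisim ε ⟨fun x u => {f₁ x u}, O₁⟩ ⟨fun x u => {f₂ x u}, O₂⟩ R := by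
  intro p hp
  obtain ⟨hdist, hstep⟩ := h p hp
  refine ⟨hdist, ?_, ?_⟩
  · rintro u _ rfl
    exact ⟨_, rfl, hstep u⟩
  · rintro u _ rfl
    exact ⟨_, rfl, hstep u⟩

section Lyapunov

variable {E : Type*} [SeminormedAddCommGroup E] {V : E → E → ℝ}

theorem lyapunov_le_add_of_modulus {γ : ℝ → ℝ} (hγ : MonotoneOn γ (Ici 0))
    (hmod : ∀ x₁ x₂ y₁ y₂, |V x₁ x₂ - V y₁ y₂| ≤ γ (‖x₁ - y₁‖ + ‖x₂ - y₂‖))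
    {x₁ x₂ y₁ y₂ : E} {δ : ℝ} (hδ : ‖x₁ - y₁‖ + ‖x₂ - y₂‖ ≤ δ) :
    V x₁ x₂ ≤ V y₁ y₂ + γ δ := by
  have hnonneg : 0 ≤ ‖x₁ - y₁‖ + ‖x₂ - y₂‖ := by positivity
  have hγδ := hγ hnonneg (hnonneg.trans hδ) hδ
  linarith [le_abs_self (V x₁ x₂ - V y₁ y₂), hmod x₁ x₂ y₁ y₂]

theorem norm_sub_le_of_lyapunov_le {α : ℝ → ℝ} (hα : StrictMonoOn α (Ici 0))
    (hlower : ∀ x y, α ‖x - y‖ ≤ V x y) {x y : E} {r : ℝ} (hr : 0 ≤ r)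
    (hV : V x y ≤ α r) : ‖x - y‖ ≤ r :=
  (hα.le_iff_le (norm_nonneg _) hr).mp ((hlower x y).trans hV)

theorem dist_le_of_lyapunov_quantize_le {α : ℝ → ℝ} (hα : StrictMonoOn α (Ici 0))
    (hlower : ∀ x y, α ‖x - y‖ ≤ V x y) {Q : E → E} {η ε : ℝ} (hQ : ∀ x, ‖Q x - x‖ ≤ η)
    (hηε : η ≤ ε) {x q : E} (hV : V (Q x) q ≤ α (ε - η)) : dist x q ≤ ε := by
  have hQxq := norm_sub_le_of_lyapunov_le hα hlower (sub_nonneg.mpr hηε) hV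
  calc dist x q ≤ dist x (Q x) + dist (Q x) q := dist_triangle _ _ _
    _ ≤ η + (ε - η) := by
      rw [dist_comm, dist_eq_norm, dist_eq_norm]
      exact add_le_add (hQ x) hQxq
    _ = ε := by ring

theorem lyapunov_quantize_map_le {γ : ℝ → ℝ} (hγ : MonotoneOn γ (Ici 0))
    (hmod : ∀ x₁ x₂ y₁ y₂, |V x₁ x₂ - V y₁ y₂| ≤ γ (‖x₁ - y₁‖ + ‖x₂ - y₂‖))
    {f Q : E → E} {c η M : ℝ} (hc : 0 ≤ c) (hf : ∀ x y, V (f x) (f y) ≤ c * V x y)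
    (hQ : ∀ x, ‖Q x - x‖ ≤ η) (hprec : γ (2 * η) + γ η * c ≤ (1 - c) * M)
    {x q : E} (hV : V (Q x) q ≤ M) : V (Q (f x)) (Q (f q)) ≤ M := by
  have hunquantize : V x q ≤ V (Q x) q + γ η :=
    lyapunov_le_add_of_modulus hγ hmod (by simpa [norm_sub_rev] using hQ x)
  have hquantize : V (Q (f x)) (Q (f q)) ≤ V (f x) (f q) + γ (2 * η) :=
    lyapunov_le_add_of_modulus hγ hmod (by linarith [hQ (f x), hQ (f q)])
  calc V (Q (f x)) (Q (f q)) ≤ c * V x q + γ (2 * η) := by linarith [hf x q]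
    _ ≤ c * (M + γ η) + γ (2 * η) := by gcongr; linarith
    _ ≤ M := by linarith

end Lyapunov

theorem symbolic_model_approx_bisim_general (n : ℕ) (P : Type*)
    (η ε κ τ : ℝ) (hεη : η < ε) (hκ : 0 < κ) (hτ : 0 < τ)
    (S : EuclideanSpace ℝ (Fin n) → P → EuclideanSpace ℝ (Fin n))
    (Q : EuclideanSpace ℝ (Fin n) → EuclideanSpace ℝ (Fin n))
    (V : EuclideanSpace ℝ (Fin n) → EuclideanSpace ℝ (Fin n) → ℝ)
    (αl γ : ℝ → ℝ)
    (hαl : StrictMonoOn αl (Set.Ici 0)) (hαl0 : αl 0 = 0)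
    (hγ : StrictMonoOn γ (Set.Ici 0))
    (hlower : ∀ x y, αl ‖x - y‖ ≤ V x y)
    (hVdiag : ∀ x, V x x = 0)
    (hdecay : ∀ x y p, V (S x p) (S y p) ≤ Real.exp (-κ * τ) * V x y)
    (hmod : ∀ x₁ x₂ y₁ y₂, |V x₁ x₂ - V y₁ y₂| ≤ γ (‖x₁ - y₁‖ + ‖x₂ - y₂‖))
    (hQlat : ∀ x, Q x ∈ QLattice n η)
    (hQerr : ∀ x, ‖Q x - x‖ ≤ η)
    (hQid : ∀ q ∈ QLattice n η, Q q = q)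
    (hprec : (γ (2 * η) + γ η * Real.exp (-κ * τ)) / (1 - Real.exp (-κ * τ))
      ≤ αl (ε - η)) :
    -- T_τ(Σ): states ℝⁿ, deterministic transitions x ↦ S(x,p), identity output
    -- T_{τ,η}(Σ): states [ℝⁿ]_η, transitions q ↦ Q_η(S(q,p)), identity output
    IsApproxBisim ε
      (⟨fun x p => {S x p}, id⟩ : TS (EuclideanSpace ℝ (Fin n)) P (EuclideanSpace ℝ (Fin n)))
      (⟨fun q p => {⟨Q (S q.1 p), hQlat _⟩}, fun q => q.1⟩ :
        TS (QLattice n η) P (EuclideanSpace ℝ (Fin n)))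
      {xq | V (Q xq.1) xq.2.1 ≤ αl (ε - η)} ∧
    (∀ x : EuclideanSpace ℝ (Fin n), ∃ q : QLattice n η,
      V (Q x) q.1 ≤ αl (ε - η)) ∧
    (∀ q : QLattice n η, ∃ x : EuclideanSpace ℝ (Fin n),
      V (Q x) q.1 ≤ αl (ε - η)) := by
  have hc : Real.exp (-κ * τ) < 1 := Real.exp_lt_one_iff.mpr (by nlinarith)
  have hprec' : γ (2 * η) + γ η * Real.exp (-κ * τ) ≤ (1 - Real.exp (-κ * τ)) * αl (ε - η) := by
    rwa [div_le_iff₀ (sub_pos.mpr hc), mul_comm (αl _)] at hprec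
  have hM : 0 ≤ αl (ε - η) :=
    hαl0 ▸ hαl.monotoneOn self_mem_Ici (sub_nonneg.mpr hεη.le) (sub_nonneg.mpr hεη.le)
  refine ⟨IsApproxBisim.of_deterministic fun xq hR => ⟨?_, fun p => ?_⟩,
    fun x => ⟨⟨Q x, hQlat x⟩, ?_⟩, fun q => ⟨q.1, ?_⟩⟩
  · exact dist_le_of_lyapunov_quantize_le hαl hlower hQerr hεη.le hR
  · exact lyapunov_quantize_map_le hγ.monotoneOn hmod (Real.exp_pos _).le
      (fun x y => hdecay x y p) hQerr hprec' hR
  · simpa only [hVdiag] using hM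
  · simpa only [hQid q.1 q.2, hVdiag] using hM

/-- Theorem 1: under the common δ-GUAS Lyapunov function assumptions
with exponential contraction `V(S(x,p),S(y,p)) ≤ e^{-κτ} V(x,y)`, lower bound
`α̲(‖x-y‖) ≤ V(x,y)`, modulus `|V(x₁,x₂)-V(y₁,y₂)| ≤ γ(‖x₁-y₁‖+‖x₂-y₂‖)` and the
precision condition (stated equivalently as
`(γ(2η)+γ(η)e^{-κτ})/(1-e^{-κτ}) ≤ α̲(ε-η)`), the relation
`R_ε = {(x₁,x₂) : V(Q_η(x₁),x₂) ≤ α̲(ε-η)}` is an `ε`-approximate bisimulation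
relation between `T_τ(Σ)` and `T_{τ,η}(Σ)`, and every state of either system is
related to a state of the other, so `T_τ(Σ) ∼_ε T_{τ,η}(Σ)`. -/
theorem symbolic_model_approx_bisim (n : ℕ) (P : Type*) [Finite P]
    (η ε κ τ : ℝ) (hη : 0 < η) (hεη : η < ε) (hκ : 0 < κ) (hτ : 0 < τ)
    (S : EuclideanSpace ℝ (Fin n) → P → EuclideanSpace ℝ (Fin n))
    (Q : EuclideanSpace ℝ (Fin n) → EuclideanSpace ℝ (Fin n))
    (V : EuclideanSpace ℝ (Fin n) → EuclideanSpace ℝ (Fin n) → ℝ)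
    (αl γ : ℝ → ℝ)
    (hαl : StrictMonoOn αl (Set.Ici 0)) (hαl0 : αl 0 = 0)
    (hγ : StrictMonoOn γ (Set.Ici 0)) (hγ0 : γ 0 = 0)
    (hlower : ∀ x y, αl ‖x - y‖ ≤ V x y)
    (hVdiag : ∀ x, V x x = 0)
    (hdecay : ∀ x y p, V (S x p) (S y p) ≤ Real.exp (-κ * τ) * V x y)
    (hmod : ∀ x₁ x₂ y₁ y₂, |V x₁ x₂ - V y₁ y₂| ≤ γ (‖x₁ - y₁‖ + ‖x₂ - y₂‖))
    (hQlat : ∀ x, Q x ∈ QLattice n η)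
    (hQerr : ∀ x, ‖Q x - x‖ ≤ η)
    (hQid : ∀ q ∈ QLattice n η, Q q = q)
    (hprec : (γ (2 * η) + γ η * Real.exp (-κ * τ)) / (1 - Real.exp (-κ * τ))
      ≤ αl (ε - η)) :
    -- T_τ(Σ): states ℝⁿ, deterministic transitions x ↦ S(x,p), identity output
    -- T_{τ,η}(Σ): states [ℝⁿ]_η, transitions q ↦ Q_η(S(q,p)), identity output
    IsApproxBisim ε
      (⟨fun x p => {S x p}, id⟩ : TS (EuclideanSpace ℝ (Fin n)) P (EuclideanSpace ℝ (Fin n)))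
      (⟨fun q p => {⟨Q (S q.1 p), hQlat _⟩}, fun q => q.1⟩ :
        TS (QLattice n η) P (EuclideanSpace ℝ (Fin n)))
      {xq | V (Q xq.1) xq.2.1 ≤ αl (ε - η)} ∧
    (∀ x : EuclideanSpace ℝ (Fin n), ∃ q : QLattice n η,
      V (Q x) q.1 ≤ αl (ε - η)) ∧
    (∀ q : QLattice n η, ∃ x : EuclideanSpace ℝ (Fin n),
      V (Q x) q.1 ≤ αl (ε - η)) :=
  symbolic_model_approx_bisim_general n P η ε κ τ hεη hκ hτ S Q V αl γ hαl hαl0 hγ hlower hVdiag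
    hdecay hmod hQlat hQerr hQid hprec
end

section
/- Theorem 2 (quantized safety controller): Let K_ε be a safety controller for the symbolic model T_{τ,η}(Σ) and specification Cont_ε(Y_S), and define K(q) = ⋃{K_ε(q') : q' ∈ [ℝⁿ]_η, V(q,q') ≤ α̲(ε-η)}. Then C = K ∘ Q_η is a safety controller for T_τ(Σ) and specification Y_S; i.e., for all x ∈ dom(C): x ∈ Y_S and for all p ∈ C(x), S(x,p) ∈ dom(C). -/
/-- The `ε`-contraction of a set `Y_S ⊆ ℝⁿ`. -/
def contEps (n : ℕ) (ε : ℝ) (Ys : Set (EuclideanSpace ℝ (Fin n))) :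
    Set (EuclideanSpace ℝ (Fin n)) :=
  {y ∈ Ys | ∀ y', ‖y - y'‖ ≤ ε → y' ∈ Ys}

/-- The paper's `dom(C)` is the set of states where `C` is nonempty. -/
def IsSafetyController {α P : Type*} (step : α → P → α) (C : α → Set P) (Y : Set α) : Prop :=
  ∀ x, (C x).Nonempty → x ∈ Y ∧ ∀ p ∈ C x, (C (step x p)).Nonempty

def refineController {α β P : Type*} (R : α → β → Prop) (K : β → Set P) (x : α) : Set P :=
  {p | ∃ q, R x q ∧ p ∈ K q}

theorem isSafetyController_refineController {α β P : Type*}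
    {step : α → P → α} {stepq : β → P → β} {R : α → β → Prop} {D Yq : Set β} {Y : Set α}
    {K : β → Set P}
    (hK : ∀ q ∈ D, (K q).Nonempty → q ∈ Yq ∧ ∀ p ∈ K q, (K (stepq q p)).Nonempty)
    (hR_dom : ∀ x q, R x q → q ∈ D)
    (hR_out : ∀ x q, R x q → q ∈ Yq → x ∈ Y)
    (hR_step : ∀ x q p, R x q → R (step x p) (stepq q p)) :
    IsSafetyController step (refineController R K) Y := by
  intro x ⟨p₀, q₀, hxq₀, hp₀⟩
  refine ⟨hR_out x q₀ hxq₀ (hK q₀ (hR_dom x q₀ hxq₀) ⟨p₀, hp₀⟩).1, ?_⟩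
  rintro p ⟨q, hxq, hp⟩
  obtain ⟨p', hp'⟩ := (hK q (hR_dom x q hxq) ⟨p, hp⟩).2 p hp
  exact ⟨p', stepq q p, hR_step x q p hxq, hp'⟩

theorem mem_of_mem_contEps {n : ℕ} {ε : ℝ} {Ys : Set (EuclideanSpace ℝ (Fin n))}
    {x q : EuclideanSpace ℝ (Fin n)} (hq : q ∈ contEps n ε Ys) (hxq : ‖x - q‖ ≤ ε) : x ∈ Ys :=
  hq.2 x (by rwa [norm_sub_rev])

theorem quantized_safety_controller_general (n : ℕ) (P : Type*)
    (η ε : ℝ)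
    (S : EuclideanSpace ℝ (Fin n) → P → EuclideanSpace ℝ (Fin n))
    (Q : EuclideanSpace ℝ (Fin n) → EuclideanSpace ℝ (Fin n))
    (V : EuclideanSpace ℝ (Fin n) → EuclideanSpace ℝ (Fin n) → ℝ)
    (αl : ℝ → ℝ)
    (Ys : Set (EuclideanSpace ℝ (Fin n)))
    (hQlat : ∀ x, Q x ∈ QLattice n η)
    -- output closeness on R_ε (first condition of approximate bisimulation):
    (hclose : ∀ x q, q ∈ QLattice n η → V (Q x) q ≤ αl (ε - η) → ‖x - q‖ ≤ ε)
    -- one-step invariance of R_ε (established in Theorem 1):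
    (hstep : ∀ x q p, q ∈ QLattice n η → V (Q x) q ≤ αl (ε - η) →
      V (Q (S x p)) (Q (S q p)) ≤ αl (ε - η))
    -- K_ε is a safety controller for T_{τ,η}(Σ) and Cont_ε(Y_S):
    (Kε : EuclideanSpace ℝ (Fin n) → Set P)
    (hKε : ∀ q ∈ QLattice n η, (Kε q).Nonempty →
      q ∈ contEps n ε Ys ∧ ∀ p ∈ Kε q, (Kε (Q (S q p))).Nonempty) :
    -- the refined controller K and the quantized controller C = K ∘ Q_η:
    ∀ K : EuclideanSpace ℝ (Fin n) → Set P,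
      (∀ q, K q = {p | ∃ q' ∈ QLattice n η, V q q' ≤ αl (ε - η) ∧ p ∈ Kε q'}) →
      -- C = K ∘ Q_η is a safety controller for T_τ(Σ) and Y_S:
      ∀ x, (K (Q x)).Nonempty →
        x ∈ Ys ∧ ∀ p ∈ K (Q x), (K (Q (S x p))).Nonempty := by
  intro K hK
  let R x q := q ∈ QLattice n η ∧ V (Q x) q ≤ αl (ε - η)
  have hC : ∀ x, K (Q x) = refineController R Kε x := fun x => by
    simp only [hK, refineController, R, and_assoc]
  have hsafe : IsSafetyController S (refineController R Kε) Ys :=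
    isSafetyController_refineController hKε (fun _ _ h => h.1)
      (fun x q h hq => mem_of_mem_contEps hq (hclose x q h.1 h.2))
      (fun x q p h => ⟨hQlat _, hstep x q p h.1 h.2⟩)
  simp only [hC]
  exact hsafe

/-- Theorem 2, quantized safety controller: in the setting of
Theorem 1 (with the relation `R_ε = {(x,q) : V(Q_η(x),q) ≤ α̲(ε-η)}`, stated here
through its key consequences: membership of `(x, Q_η(x))`, output closeness, and
one-step invariance), if `K_ε` is a safety controller for the symbolic model
`T_{τ,η}(Σ)` (transitions `q ↦ Q_η(S(q,p))`) and specification `Cont_ε(Y_S)`, and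
`K(q) = ⋃ {K_ε(q') : q' ∈ [ℝⁿ]_η, V(q,q') ≤ α̲(ε-η)}`, then `C = K ∘ Q_η` is a
safety controller for `T_τ(Σ)` and specification `Y_S`. -/
theorem quantized_safety_controller (n : ℕ) (P : Type*) [Finite P]
    (η ε : ℝ) (hη : 0 < η) (hεη : η < ε)
    (S : EuclideanSpace ℝ (Fin n) → P → EuclideanSpace ℝ (Fin n))
    (Q : EuclideanSpace ℝ (Fin n) → EuclideanSpace ℝ (Fin n))
    (V : EuclideanSpace ℝ (Fin n) → EuclideanSpace ℝ (Fin n) → ℝ)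
    (αl : ℝ → ℝ)
    (Ys : Set (EuclideanSpace ℝ (Fin n))) (hYs : IsCompact Ys)
    (hQlat : ∀ x, Q x ∈ QLattice n η)
    (hQid : ∀ q ∈ QLattice n η, Q q = q)
    -- (x, Q_η(x)) ∈ R_ε for every x:
    (hQrel : ∀ x, V (Q x) (Q x) ≤ αl (ε - η))
    -- output closeness on R_ε (first condition of approximate bisimulation):
    (hclose : ∀ x q, q ∈ QLattice n η → V (Q x) q ≤ αl (ε - η) → ‖x - q‖ ≤ ε)
    -- one-step invariance of R_ε (established in Theorem 1):
    (hstep : ∀ x q p, q ∈ QLattice n η → V (Q x) q ≤ αl (ε - η) →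
      V (Q (S x p)) (Q (S q p)) ≤ αl (ε - η))
    -- K_ε is a safety controller for T_{τ,η}(Σ) and Cont_ε(Y_S):
    (Kε : EuclideanSpace ℝ (Fin n) → Set P)
    (hKε : ∀ q ∈ QLattice n η, (Kε q).Nonempty →
      q ∈ contEps n ε Ys ∧ ∀ p ∈ Kε q, (Kε (Q (S q p))).Nonempty) :
    -- the refined controller K and the quantized controller C = K ∘ Q_η:
    ∀ K : EuclideanSpace ℝ (Fin n) → Set P,
      (∀ q, K q = {p | ∃ q' ∈ QLattice n η, V q q' ≤ αl (ε - η) ∧ p ∈ Kε q'}) →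
      -- C = K ∘ Q_η is a safety controller for T_τ(Σ) and Y_S:
      ∀ x, (K (Q x)).Nonempty →
        x ∈ Ys ∧ ∀ p ∈ K (Q x), (K (Q (S x p))).Nonempty :=
  quantized_safety_controller_general n P η ε S Q V αl Ys hQlat hclose hstep Kε hKε
end

section
/- Entry time recursion: let C be a controller for a non-blocking transition system T with C(x) ≠ ∅ for all x, and let J(x) = J(T/C, Y_S, Y_T, x) be the entry time for the reachability specification (Y_S, Y_T). Then for every state x with 0 < J(x) < +∞, J(x) = 1 + max over u ∈ C(x) and x' ∈ S(x,u) of J(x'). -/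
/-- `s, u` is a trajectory of length `N` of the controlled system `T/C`. -/
def IsCtrlTraj {X U : Type*} (S : X → U → Set X) (C : X → Set U)
    (s : ℕ → X) (u : ℕ → U) (N : ℕ) : Prop :=
  ∀ i < N, u i ∈ C (s i) ∧ s (i + 1) ∈ S (s i) (u i)

/-- The trajectory `s` (of length `N`) meets the reachability specification
`(Y_S, Y_T)`: some index `K ≤ N` has output in `Y_T` with all outputs up to `K`
in `Y_S`. -/
def MeetsSpec {X Y : Type*} (O : X → Y) (Ys Yt : Set Y)
    (s : ℕ → X) (N : ℕ) : Prop :=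
  ∃ K ≤ N, (∀ k ≤ K, O (s k) ∈ Ys) ∧ O (s K) ∈ Yt

/-- The entry time `J(T/C, Y_S, Y_T, x)`: the smallest `N` such that every
trajectory of `T/C` of length `N` from `x` meets the specification; `⊤` if none. -/
noncomputable def entryTime {X U Y : Type*} (S : X → U → Set X) (C : X → Set U)
    (O : X → Y) (Ys Yt : Set Y) (x : X) : ℕ∞ :=
  sInf {N : ℕ∞ | ∃ m : ℕ, N = (m : ℕ∞) ∧
    ∀ s u, s 0 = x → IsCtrlTraj S C s u m → MeetsSpec O Ys Yt s m}

/-!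
Write `P m x` (`SpecGuaranteed`) for "every controlled trajectory of length `m` from `x` meets
the specification". Since `P m x` is monotone in `m`, `J(x) ≤ m ↔ P m x`. If `O x ∈ Y_S \ Y_T`,
a trajectory from `x` meets the specification exactly when its tail does, so `P (m + 1) x` holds
iff `P m x'` holds for every successor `x'`, i.e. `J(x) ≤ m + 1 ↔ max J(x') ≤ m`. Both conditions
on `x` follow from `0 < J(x) < ∞`: the controller admits an infinite trajectory from `x`, so
finiteness of `J(x)` forces `O x ∈ Y_S`, and then `O x ∈ Y_T` would give `J(x) = 0`.
-/

def SpecGuaranteed {X U Y : Type*} (S : X → U → Set X) (C : X → Set U) (O : X → Y)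
    (Ys Yt : Set Y) (N : ℕ) (x : X) : Prop :=
  ∀ s u, s 0 = x → IsCtrlTraj S C s u N → MeetsSpec O Ys Yt s N

section EntryTime

variable {X U Y : Type*} {S : X → U → Set X} {C : X → Set U} {O : X → Y} {Ys Yt : Set Y}
  {s : ℕ → X} {u : ℕ → U} {m n : ℕ} {x : X}

theorem IsCtrlTraj.mono (h : IsCtrlTraj S C s u n) (hmn : m ≤ n) : IsCtrlTraj S C s u m :=
  fun i hi => h i (hi.trans_le hmn)

theorem isCtrlTraj_succ_iff :
    IsCtrlTraj S C s u (n + 1) ↔ (u 0 ∈ C (s 0) ∧ s 1 ∈ S (s 0) (u 0)) ∧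
      IsCtrlTraj S C (fun i => s (i + 1)) (fun i => u (i + 1)) n :=
  Nat.forall_lt_succ_left'

theorem meetsSpec_succ_iff (hs : O (s 0) ∈ Ys) (ht : O (s 0) ∉ Yt) :
    MeetsSpec O Ys Yt s (n + 1) ↔ MeetsSpec O Ys Yt (fun i => s (i + 1)) n := by
  constructor
  · rintro ⟨_ | K, hK, hsafe, htarget⟩
    · exact absurd htarget ht
    · exact ⟨K, by omega, fun k hk => hsafe (k + 1) (by omega), htarget⟩
  · rintro ⟨K, hK, hsafe, htarget⟩
    refine ⟨K + 1, by omega, fun k hk => ?_, htarget⟩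
    rcases k with _ | k
    exacts [hs, hsafe k (by omega)]

theorem exists_isCtrlTraj (hCE : ∀ x, ∀ u ∈ C x, (S x u).Nonempty)
    (hCne : ∀ x, (C x).Nonempty) (x : X) : ∃ s u, s 0 = x ∧ ∀ n, IsCtrlTraj S C s u n := by
  choose v hv using hCne
  choose next hnext using fun y => hCE y (v y) (hv y)
  refine ⟨fun k => next^[k] x, fun k => v (next^[k] x), rfl, fun n i _ => ⟨hv _, ?_⟩⟩
  simpa only [Function.iterate_succ_apply'] using hnext _

theorem SpecGuaranteed.mono (h : SpecGuaranteed S C O Ys Yt m x) (hmn : m ≤ n) :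
    SpecGuaranteed S C O Ys Yt n x := by
  intro s u hs0 htraj
  obtain ⟨K, hK, hsafe, htarget⟩ := h s u hs0 (htraj.mono hmn)
  exact ⟨K, hK.trans hmn, hsafe, htarget⟩

theorem SpecGuaranteed.output_mem_safe (hCE : ∀ x, ∀ u ∈ C x, (S x u).Nonempty)
    (hCne : ∀ x, (C x).Nonempty) (h : SpecGuaranteed S C O Ys Yt n x) : O x ∈ Ys := by
  obtain ⟨s, u, hs0, htraj⟩ := exists_isCtrlTraj hCE hCne x
  obtain ⟨K, -, hsafe, -⟩ := h s u hs0 (htraj n)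
  exact hs0 ▸ hsafe 0 K.zero_le

theorem specGuaranteed_zero_iff [Nonempty U] :
    SpecGuaranteed S C O Ys Yt 0 x ↔ O x ∈ Ys ∧ O x ∈ Yt := by
  constructor
  · intro h
    obtain ⟨K, hK, hsafe, htarget⟩ :=
      h (fun _ => x) (fun _ => Classical.arbitrary U) rfl (fun i hi => (Nat.not_lt_zero i hi).elim)
    exact ⟨hsafe K le_rfl, htarget⟩
  · rintro ⟨hs, ht⟩ s u rfl -
    exact ⟨0, le_rfl, fun k hk => Nat.le_zero.1 hk ▸ hs, ht⟩

theorem specGuaranteed_succ_iff (hs : O x ∈ Ys) (ht : O x ∉ Yt) :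
    SpecGuaranteed S C O Ys Yt (m + 1) x ↔
      ∀ u ∈ C x, ∀ x' ∈ S x u, SpecGuaranteed S C O Ys Yt m x' := by
  constructor
  · rintro h u hu _ hx' s w rfl htraj
    exact (meetsSpec_succ_iff (s := fun | 0 => x | i + 1 => s i) hs ht).1 <|
      h _ (fun | 0 => u | i + 1 => w i) rfl (isCtrlTraj_succ_iff.2 ⟨⟨hu, hx'⟩, htraj⟩)
  · rintro h s w rfl htraj
    obtain ⟨⟨hw0, hs1⟩, htail⟩ := isCtrlTraj_succ_iff.1 htraj
    exact (meetsSpec_succ_iff hs ht).2 (h _ hw0 _ hs1 _ _ rfl htail)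

theorem entryTime_le_natCast_iff :
    entryTime S C O Ys Yt x ≤ m ↔ SpecGuaranteed S C O Ys Yt m x := by
  rw [← ENat.lt_natCast_add_one_iff, entryTime, sInf_lt_iff]
  constructor
  · rintro ⟨_, ⟨k, rfl, hk⟩, hlt⟩
    exact SpecGuaranteed.mono hk (Nat.lt_succ_iff.1 (by exact_mod_cast hlt))
  · exact fun h => ⟨m, ⟨m, rfl, h⟩, by exact_mod_cast m.lt_add_one⟩

theorem entryTime_eq_one_add_iSup [Nonempty U] (hs : O x ∈ Ys) (ht : O x ∉ Yt) :
    entryTime S C O Ys Yt x = 1 + ⨆ u ∈ C x, ⨆ x' ∈ S x u, entryTime S C O Ys Yt x' := by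
  suffices h : ∀ n : ℕ, entryTime S C O Ys Yt x ≤ n ↔
      1 + ⨆ u ∈ C x, ⨆ x' ∈ S x u, entryTime S C O Ys Yt x' ≤ n from
    WithTop.eq_of_forall_le_coe_iff h
  intro n
  rw [entryTime_le_natCast_iff]
  rcases n with _ | m
  · simp [specGuaranteed_zero_iff, ht]
  · rw [specGuaranteed_succ_iff hs ht, Nat.cast_succ, add_comm,
      ENat.add_le_add_iff_right ENat.one_ne_top]
    simp only [iSup₂_le_iff, entryTime_le_natCast_iff]

end EntryTime

theorem entryTime_recursion_general {X U Y : Type*}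
    (S : X → U → Set X) (C : X → Set U) (O : X → Y) (Ys Yt : Set Y)
    (hCE : ∀ x, ∀ u ∈ C x, (S x u).Nonempty)
    (hCne : ∀ x, (C x).Nonempty)
    (x : X) (hpos : 0 < entryTime S C O Ys Yt x)
    (hfin : entryTime S C O Ys Yt x < ⊤) :
    entryTime S C O Ys Yt x =
      1 + ⨆ u ∈ C x, ⨆ x' ∈ S x u, entryTime S C O Ys Yt x' := by
  have : Nonempty U := ⟨(hCne x).some⟩
  obtain ⟨n, hn⟩ := ENat.ne_top_iff_exists.1 hfin.ne
  have hs : O x ∈ Ys := (entryTime_le_natCast_iff.1 hn.ge).output_mem_safe hCE hCne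
  have ht : O x ∉ Yt := fun ht => hpos.ne' <| nonpos_iff_eq_zero.1 <|
    entryTime_le_natCast_iff (m := 0) |>.2 (specGuaranteed_zero_iff.2 ⟨hs, ht⟩)
  exact entryTime_eq_one_add_iSup hs ht

/-- entry time recursion: for a controller `C` (nonempty everywhere,
enabling only feasible inputs) on a non-blocking system, if `0 < J(x) < ∞` then
`J(x) = 1 + max_{u ∈ C(x), x' ∈ S(x,u)} J(x')`. -/
theorem entryTime_recursion {X U Y : Type*}
    (S : X → U → Set X) (C : X → Set U) (O : X → Y) (Ys Yt : Set Y)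
    (hYts : Yt ⊆ Ys)
    (hnb : ∀ x, ∃ u, (S x u).Nonempty)
    (hCE : ∀ x, ∀ u ∈ C x, (S x u).Nonempty)
    (hCne : ∀ x, (C x).Nonempty)
    (x : X) (hpos : 0 < entryTime S C O Ys Yt x)
    (hfin : entryTime S C O Ys Yt x < ⊤) :
    entryTime S C O Ys Yt x =
      1 + ⨆ u ∈ C x, ⨆ x' ∈ S x u, entryTime S C O Ys Yt x' :=
  entryTime_recursion_general S C O Ys Yt hCE hCne x hpos hfin
end
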